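/- Define in (ℂ²)^{⊗4} the states |0̄⟩ = |ψ⁻⟩₁₂ ⊗ |ψ⁻⟩₃₄ and |1̄⟩ = (1/√3)(|T₊⟩₁₂⊗|T₋⟩₃₄ − |T₀⟩₁₂⊗|T₀⟩₃₄ + |T₋⟩₁₂⊗|T₊⟩₃₄). Then |0̄⟩ and |1̄⟩ are unit vectors, are orthogonal to each other, and are annihilated by all three collective spin operators: S_x|0̄⟩ = S_y|0̄⟩ = S_z|0̄⟩ = 0 and S_x|1̄⟩ = S_y|1̄⟩ = S_z|1̄⟩ = 0. (Hence they span a decoherence-free subspace for strong collective decoherence on four qubits.) -/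

import Mathlib

open Complex

/-- A (not necessarily normalised) state of `N` qubits, as a function on the
computational basis `Fin N → Fin 2`. -/
abbrev QState (N : ℕ) := (Fin N → Fin 2) → ℂ

/-- The Hermitian inner product on `N`-qubit states. -/
noncomputable def qInner {N : ℕ} (ψ φ : QState N) : ℂ :=
  ∑ s : Fin N → Fin 2, (starRingEnd ℂ) (ψ s) * φ s

/-- Pauli `X` acting on the `n`-th qubit. -/
noncomputable def pauliX {N : ℕ} (n : Fin N) (ψ : QState N) : QState N :=
  fun s => ψ (Function.update s n (s n + 1))

/-- Pauli `Y` acting on the `n`-th qubit. -/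
noncomputable def pauliY {N : ℕ} (n : Fin N) (ψ : QState N) : QState N :=
  fun s => (if s n = 0 then -Complex.I else Complex.I) * ψ (Function.update s n (s n + 1))

/-- Pauli `Z` acting on the `n`-th qubit. -/
noncomputable def pauliZ {N : ℕ} (n : Fin N) (ψ : QState N) : QState N :=
  fun s => (if s n = 0 then 1 else -1) * ψ s

/-- The collective spin operator `S_x = (1/2) Σ_n X_n`. -/
noncomputable def Sx {N : ℕ} (ψ : QState N) : QState N :=
  (1 / 2 : ℂ) • ∑ n : Fin N, pauliX n ψ

/-- The collective spin operator `S_y = (1/2) Σ_n Y_n`. -/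
noncomputable def Sy {N : ℕ} (ψ : QState N) : QState N :=
  (1 / 2 : ℂ) • ∑ n : Fin N, pauliY n ψ

/-- The collective spin operator `S_z = (1/2) Σ_n Z_n`. -/
noncomputable def Sz {N : ℕ} (ψ : QState N) : QState N :=
  (1 / 2 : ℂ) • ∑ n : Fin N, pauliZ n ψ

/-- The two-qubit singlet state `|ψ⁻⟩ = (|01⟩ − |10⟩)/√2`. -/
noncomputable def singlet : Fin 2 → Fin 2 → ℂ := fun a b =>
  (if (a, b) = (0, 1) then 1 else if (a, b) = (1, 0) then -1 else 0) / (Real.sqrt 2 : ℂ)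

/-- The two-qubit triplet state `|T₊⟩ = |00⟩`. -/
noncomputable def Tplus : Fin 2 → Fin 2 → ℂ := fun a b => if (a, b) = (0, 0) then 1 else 0

/-- The two-qubit triplet state `|T₀⟩ = (|01⟩ + |10⟩)/√2`. -/
noncomputable def T0 : Fin 2 → Fin 2 → ℂ := fun a b =>
  (if (a, b) = (0, 1) then 1 else if (a, b) = (1, 0) then 1 else 0) / (Real.sqrt 2 : ℂ)

/-- The two-qubit triplet state `|T₋⟩ = |11⟩`. -/
noncomputable def Tminus : Fin 2 → Fin 2 → ℂ := fun a b => if (a, b) = (1, 1) then 1 else 0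

/-- The logical zero state `|0̄⟩ = |ψ⁻⟩₁₂ ⊗ |ψ⁻⟩₃₄` of the 4-qubit DF subspace. -/
noncomputable def zeroBar : QState 4 := fun s => singlet (s 0) (s 1) * singlet (s 2) (s 3)

/-- The logical one state
`|1̄⟩ = (1/√3)(|T₊⟩₁₂⊗|T₋⟩₃₄ − |T₀⟩₁₂⊗|T₀⟩₃₄ + |T₋⟩₁₂⊗|T₊⟩₃₄)` of the 4-qubit DF subspace. -/
noncomputable def oneBar : QState 4 := fun s =>
  (1 / (Real.sqrt 3 : ℂ)) *
    (Tplus (s 0) (s 1) * Tminus (s 2) (s 3) - T0 (s 0) (s 1) * T0 (s 2) (s 3) +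
      Tminus (s 0) (s 1) * Tplus (s 2) (s 3))


/-!
Both states are assembled from two-qubit blocks: `|0̄⟩ = |ψ⁻⟩ ⊗ |ψ⁻⟩`, and `|1̄⟩` couples two
spin-1 triplets to total spin 0. For any one-qubit matrix `M`, the collective operator
`(1/2) Σₙ Mₙ` acts on a product `|ψ⟩₁₂ ⊗ |φ⟩₃₄` by the Leibniz rule through the two-qubit
operator `(M ⊗ 1 + 1 ⊗ M) / 2`. That operator multiplies the singlet by `tr M / 2` and maps
the triplets among themselves; in `|1̄⟩` the off-diagonal contributions cancel pairwise, so
both states are eigenvectors of every collective operator with eigenvalue `tr M`. The Pauli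
matrices are traceless. Orthonormality reduces, since inner products of product states
factorize, to the orthonormality of the singlet and the triplets.
-/

open Matrix

def pairProduct (ψ φ : Fin 2 → Fin 2 → ℂ) : QState 4 := fun s => ψ (s 0) (s 1) * φ (s 2) (s 3)

theorem zeroBar_eq_pairProduct : zeroBar = pairProduct singlet singlet := rfl

theorem oneBar_eq_pairProduct : oneBar = (1 / (Real.sqrt 3 : ℂ)) •
    (pairProduct Tplus Tminus - pairProduct T0 T0 + pairProduct Tminus Tplus) := rfl

theorem ofReal_sqrt_two_sq : ((Real.sqrt 2 : ℝ) : ℂ) ^ 2 = 2 := by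
  rw [← ofReal_pow, Real.sq_sqrt zero_le_two, ofReal_ofNat]

theorem ofReal_sqrt_three_sq : ((Real.sqrt 3 : ℝ) : ℂ) ^ 2 = 3 := by
  rw [← ofReal_pow, Real.sq_sqrt zero_le_three, ofReal_ofNat]

section Inner

theorem sum_pi_fin_succ {α M : Type*} [Fintype α] [AddCommMonoid M] {n : ℕ}
    (f : (Fin (n + 1) → α) → M) : ∑ s, f s = ∑ a, ∑ t : Fin n → α, f (vecCons a t) := by
  rw [← Fintype.sum_prod_type']
  exact (Fintype.sum_equiv (Fin.consEquiv fun _ => α) _ _ fun _ => rfl).symm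

noncomputable def inner₂ (ψ φ : Fin 2 → Fin 2 → ℂ) : ℂ :=
  ∑ a, ∑ b, (starRingEnd ℂ) (ψ a b) * φ a b

theorem qInner_pairProduct (ψ φ ψ' φ' : Fin 2 → Fin 2 → ℂ) :
    qInner (pairProduct ψ φ) (pairProduct ψ' φ') = inner₂ ψ ψ' * inner₂ φ φ' := by
  simp only [qInner, inner₂, pairProduct, sum_pi_fin_succ]
  simp [Fin.sum_univ_two]
  ring

variable {N : ℕ} (ψ ψ' φ φ' : QState N) (c : ℂ)

theorem qInner_add_left : qInner (ψ + ψ') φ = qInner ψ φ + qInner ψ' φ := by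
  simp [qInner, add_mul, Finset.sum_add_distrib]

theorem qInner_sub_left : qInner (ψ - ψ') φ = qInner ψ φ - qInner ψ' φ := by
  simp [qInner, sub_mul, Finset.sum_sub_distrib]

theorem qInner_smul_left : qInner (c • ψ) φ = starRingEnd ℂ c * qInner ψ φ := by
  simp [qInner, Finset.mul_sum, mul_assoc]

theorem qInner_add_right : qInner ψ (φ + φ') = qInner ψ φ + qInner ψ φ' := by
  simp [qInner, mul_add, Finset.sum_add_distrib]

theorem qInner_sub_right : qInner ψ (φ - φ') = qInner ψ φ - qInner ψ φ' := by
  simp [qInner, mul_sub, Finset.sum_sub_distrib]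

theorem qInner_smul_right : qInner ψ (c • φ) = c * qInner ψ φ := by
  simp [qInner, Finset.mul_sum, mul_left_comm]

end Inner

theorem qInner_zeroBar_zeroBar : qInner zeroBar zeroBar = 1 := by
  rw [zeroBar_eq_pairProduct, qInner_pairProduct]
  simp [inner₂, singlet, Fin.sum_univ_two]
  grind [ofReal_sqrt_two_sq]

theorem qInner_oneBar_oneBar : qInner oneBar oneBar = 1 := by
  rw [oneBar_eq_pairProduct]
  simp only [qInner_smul_left, qInner_smul_right, qInner_add_left, qInner_add_right,
    qInner_sub_left, qInner_sub_right, qInner_pairProduct]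
  simp [inner₂, Tplus, T0, Tminus, Fin.sum_univ_two]
  grind [ofReal_sqrt_two_sq, ofReal_sqrt_three_sq]

theorem qInner_zeroBar_oneBar : qInner zeroBar oneBar = 0 := by
  rw [zeroBar_eq_pairProduct, oneBar_eq_pairProduct]
  simp only [qInner_smul_right, qInner_add_right, qInner_sub_right, qInner_pairProduct]
  simp [inner₂, singlet, Tplus, T0, Tminus, Fin.sum_univ_two]
  ring

section Collective

variable {N : ℕ}

def onQubit (M : Matrix (Fin 2) (Fin 2) ℂ) (n : Fin N) : QState N →ₗ[ℂ] QState N where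
  toFun ψ s := ∑ t, M (s n) t * ψ (Function.update s n t)
  map_add' ψ φ := by funext s; simp [mul_add, Finset.sum_add_distrib]
  map_smul' c ψ := by funext s; simp [mul_add, mul_left_comm]

noncomputable def collective (M : Matrix (Fin 2) (Fin 2) ℂ) : QState N →ₗ[ℂ] QState N :=
  (1 / 2 : ℂ) • ∑ n, onQubit M n

def σX : Matrix (Fin 2) (Fin 2) ℂ := !![0, 1; 1, 0]

def σY : Matrix (Fin 2) (Fin 2) ℂ := !![0, -I; I, 0]

def σZ : Matrix (Fin 2) (Fin 2) ℂ := !![1, 0; 0, -1]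

theorem pauliX_eq_onQubit (n : Fin N) (ψ : QState N) : pauliX n ψ = onQubit σX n ψ := by
  funext s
  obtain h | h : s n = 0 ∨ s n = 1 := by omega
  all_goals simp [pauliX, onQubit, σX, h, Fin.sum_univ_two]

theorem pauliY_eq_onQubit (n : Fin N) (ψ : QState N) : pauliY n ψ = onQubit σY n ψ := by
  funext s
  obtain h | h : s n = 0 ∨ s n = 1 := by omega
  all_goals simp [pauliY, onQubit, σY, h, Fin.sum_univ_two]

theorem pauliZ_eq_onQubit (n : Fin N) (ψ : QState N) : pauliZ n ψ = onQubit σZ n ψ := by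
  funext s
  have hs : Function.update s n (s n) = s := Function.update_eq_self n s
  obtain h | h : s n = 0 ∨ s n = 1 := by omega
  all_goals
    rw [h] at hs
    simp [pauliZ, onQubit, σZ, h, hs, Fin.sum_univ_two]

theorem Sx_eq_collective (ψ : QState N) : Sx ψ = collective σX ψ := by
  simp [Sx, collective, pauliX_eq_onQubit]

theorem Sy_eq_collective (ψ : QState N) : Sy ψ = collective σY ψ := by
  simp [Sy, collective, pauliY_eq_onQubit]

theorem Sz_eq_collective (ψ : QState N) : Sz ψ = collective σZ ψ := by
  simp [Sz, collective, pauliZ_eq_onQubit]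

end Collective

theorem trace_σX : σX.trace = 0 := by simp [σX, trace_fin_two]

theorem trace_σY : σY.trace = 0 := by simp [σY, trace_fin_two]

theorem trace_σZ : σZ.trace = 0 := by simp [σZ, trace_fin_two]

section TwoQubit

variable (M : Matrix (Fin 2) (Fin 2) ℂ)

noncomputable def collective₂ (ψ : Fin 2 → Fin 2 → ℂ) : Fin 2 → Fin 2 → ℂ :=
  fun a b => (1 / 2 : ℂ) * (∑ t, M a t * ψ t b + ∑ t, M b t * ψ a t)

theorem collective_pairProduct (ψ φ : Fin 2 → Fin 2 → ℂ) :
    collective M (pairProduct ψ φ) =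
      pairProduct (collective₂ M ψ) φ + pairProduct ψ (collective₂ M φ) := by
  funext s
  simp [collective, onQubit, pairProduct, collective₂, Fin.sum_univ_four]
  ring

theorem collective₂_singlet : collective₂ M singlet = (M.trace / 2) • singlet := by
  funext a b
  fin_cases a <;> fin_cases b <;> simp [collective₂, singlet, Fin.sum_univ_two, trace_fin_two] <;>
    ring

theorem collective₂_Tplus :
    collective₂ M Tplus = M 0 0 • Tplus + (M 1 0 / Real.sqrt 2) • T0 := by
  funext a b
  fin_cases a <;> fin_cases b <;> simp [collective₂, Tplus, T0] <;> grind [ofReal_sqrt_two_sq]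

theorem collective₂_Tminus :
    collective₂ M Tminus = M 1 1 • Tminus + (M 0 1 / Real.sqrt 2) • T0 := by
  funext a b
  fin_cases a <;> fin_cases b <;> simp [collective₂, Tminus, T0] <;> grind [ofReal_sqrt_two_sq]

theorem collective₂_T0 :
    collective₂ M T0 = (M.trace / 2) • T0 + (M 0 1 / Real.sqrt 2) • Tplus +
      (M 1 0 / Real.sqrt 2) • Tminus := by
  funext a b
  fin_cases a <;> fin_cases b <;>
    simp [collective₂, Tplus, Tminus, T0, Fin.sum_univ_two, trace_fin_two] <;>
    grind [ofReal_sqrt_two_sq]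

theorem collective_zeroBar : collective M zeroBar = M.trace • zeroBar := by
  rw [zeroBar_eq_pairProduct, collective_pairProduct, collective₂_singlet]
  funext s
  simp [pairProduct]
  ring

theorem collective_oneBar : collective M oneBar = M.trace • oneBar := by
  rw [oneBar_eq_pairProduct]
  simp only [map_smul, map_add, map_sub, collective_pairProduct, collective₂_Tplus,
    collective₂_Tminus, collective₂_T0]
  funext s
  simp [pairProduct, trace_fin_two]
  ring

end TwoQubit

/-- `|0̄⟩` and `|1̄⟩` are orthonormal and are annihilated by all three
collective spin operators, so they span a decoherence-free subspace for strong
collective decoherence on four qubits. -/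
theorem four_qubit_df_subspace :
    qInner zeroBar zeroBar = 1 ∧ qInner oneBar oneBar = 1 ∧ qInner zeroBar oneBar = 0 ∧
      Sx zeroBar = 0 ∧ Sy zeroBar = 0 ∧ Sz zeroBar = 0 ∧
      Sx oneBar = 0 ∧ Sy oneBar = 0 ∧ Sz oneBar = 0 := by
  refine ⟨qInner_zeroBar_zeroBar, qInner_oneBar_oneBar, qInner_zeroBar_oneBar, ?_⟩
  simp only [Sx_eq_collective, Sy_eq_collective, Sz_eq_collective, collective_zeroBar,
    collective_oneBar, trace_σX, trace_σY, trace_σZ, zero_smul, and_self]
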